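/- arXiv:1202.0542 — 3 statements merged into one kernel-verified Lean document; each statement's English description precedes it below -/
import Mathlib

section
/- The maximal adjacency cliques of the Grassmannian 𝒢 are precisely the stars and the tops. That is, a subset 𝒜 ⊆ 𝒢 is an adjacency clique that is not properly contained in any other adjacency clique if, and only if, 𝒜 is a star or a top. -/
/-! In the subspace lattice, `X ∼ Y` says that `X` and `Y` both cover `X ⊓ Y`, equivalently (by
modularity) that both are covered by `X ⊔ Y`; a star is the set of upper covers of its centre and a
top the set of lower covers of its carrier. So the argument is lattice-theoretic and self-dual.

Of three mutually adjacent elements, the third contains the meet or lies in the join of the other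
two. Hence a clique with distinct members `X, Y` lies in the star of `X ⊓ Y` or in the top of
`X ⊔ Y`. Conversely, an element adjacent to three members of a star that do not lie in a common top
contains the centre; such members exist because `dim V > 2` forces every `X ∈ 𝒢` to have dimension
and codimension at least `2`. Tops are handled by passing to the order dual. -/

/-- The Grassmannian `𝒢` of all subspaces `X ≤ V` with `X ≅ V/X`. -/
def Grass (K V : Type*) [DivisionRing K] [AddCommGroup V] [Module K V] :
    Set (Submodule K V) :=
  {X | Nonempty (X ≃ₗ[K] (V ⧸ X))}

variable {K V : Type*} [DivisionRing K] [AddCommGroup V] [Module K V]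

/-- The dimension of the quotient `E / M` (computed as the rank of `E ⧸ (M ∩ E)`). -/
noncomputable def quotRank (M E : Submodule K V) : Cardinal :=
  Module.rank K (E ⧸ (M.comap E.subtype))

/-- Two subspaces are adjacent if `dim (X/(X ⊓ Y)) = dim (Y/(X ⊓ Y)) = 1`. -/
def Adjacent (X Y : Submodule K V) : Prop :=
  quotRank (X ⊓ Y) X = 1 ∧ quotRank (X ⊓ Y) Y = 1

/-- Two subspaces are distant if they are complementary: `X ⊕ Y = V`. -/
def Distant (X Y : Submodule K V) : Prop := IsCompl X Y

/-- The star `𝒢[M⟩` with centre `M`. -/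
def starSet (M : Submodule K V) : Set (Submodule K V) :=
  {E | M ≤ E ∧ quotRank M E = 1}

/-- `M` is the centre of a star, i.e. there is `X ∈ 𝒢` with `M ≤ X`, `dim (X/M) = 1`. -/
def IsStarCentre (M : Submodule K V) : Prop :=
  ∃ X ∈ Grass K V, M ≤ X ∧ quotRank M X = 1

/-- The top `𝒢⟨N]` with carrier `N`. -/
def topSet (N : Submodule K V) : Set (Submodule K V) :=
  {E | E ≤ N ∧ quotRank E N = 1}

/-- `N` is the carrier of a top, i.e. there is `X ∈ 𝒢` with `X ≤ N`, `dim (N/X) = 1`. -/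
def IsTopCarrier (N : Submodule K V) : Prop :=
  ∃ X ∈ Grass K V, X ≤ N ∧ quotRank X N = 1

/-- An adjacency clique: a set of mutually adjacent elements of `𝒢`. -/
def IsAdjClique (A : Set (Submodule K V)) : Prop :=
  A ⊆ Grass K V ∧ A.Pairwise Adjacent

/-- A maximal adjacency clique. -/
def IsMaxAdjClique (A : Set (Submodule K V)) : Prop :=
  IsAdjClique A ∧ ∀ B, IsAdjClique B → A ⊆ B → A = B

/-- The pencil `𝒢[M,N] = {X ∈ 𝒢 | M < X < N}`. -/
def pencilSet (M N : Submodule K V) : Set (Submodule K V) :=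
  {X ∈ Grass K V | M < X ∧ X < N}

/-- `(M, N)` defines a pencil: there is `X ∈ 𝒢` with `M ≤ X ≤ N` and
`dim (X/M) = dim (N/X) = 1`. -/
def IsPencilPair (M N : Submodule K V) : Prop :=
  ∃ X ∈ Grass K V, M ≤ X ∧ X ≤ N ∧ quotRank M X = 1 ∧ quotRank X N = 1

/-- A pencil in `𝒢`. -/
def IsPencil (S : Set (Submodule K V)) : Prop :=
  ∃ M N : Submodule K V, IsPencilPair M N ∧ S = pencilSet M N

/-- A point is a one-dimensional subspace. -/
def IsPoint (p : Submodule K V) : Prop := Module.rank K p = 1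

/-- A line is a two-dimensional subspace. -/
def IsLine (L : Submodule K V) : Prop := Module.rank K L = 2

/-- Two subspaces meet if they have a common point, i.e. nonzero intersection. -/
def Meets (X Y : Submodule K V) : Prop := X ⊓ Y ≠ ⊥

/-- A distant clique: a set of mutually distant elements of `𝒢`. -/
def IsDistantClique (R : Set (Submodule K V)) : Prop :=
  R ⊆ Grass K V ∧ R.Pairwise Distant

/-- A set has at least three elements. -/
def HasThree (R : Set (Submodule K V)) : Prop :=
  ∃ A ∈ R, ∃ B ∈ R, ∃ C ∈ R, A ≠ B ∧ A ≠ C ∧ B ≠ C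

/-- Condition (R2): if a line meets three mutually distinct elements of `R`
then it meets all elements of `R`. -/
def MeetsThreeMeetsAll (R : Set (Submodule K V)) : Prop :=
  ∀ L : Submodule K V, IsLine L →
    ∀ E₀ ∈ R, ∀ E₁ ∈ R, ∀ E₂ ∈ R, E₀ ≠ E₁ → E₀ ≠ E₂ → E₁ ≠ E₂ →
      Meets L E₀ → Meets L E₁ → Meets L E₂ → ∀ E ∈ R, Meets L E

/-- A partial `Z`-regulus: conditions (R1) and (R2). -/
def IsPartialZRegulus (R : Set (Submodule K V)) : Prop :=
  (IsDistantClique R ∧ HasThree R) ∧ MeetsThreeMeetsAll R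

/-- A `Z`-regulus: a partial `Z`-regulus that is maximal, i.e. not properly
contained in any partial `Z`-regulus. -/
def IsZRegulus (R : Set (Submodule K V)) : Prop :=
  IsPartialZRegulus R ∧ ∀ S : Set (Submodule K V), IsPartialZRegulus S → R ⊆ S → R = S

/-- A directrix of `R`: a line meeting all elements of `R`. -/
def IsDirectrix (R : Set (Submodule K V)) (L : Submodule K V) : Prop :=
  IsLine L ∧ ∀ E ∈ R, Meets L E

/-- Condition (⊠2) from Theorem `Zreg`. -/
def BoxTwo (R : Set (Submodule K V)) : Prop :=
  ∀ E₀ ∈ R, ∀ E₁ ∈ R, ∀ E₂ ∈ R, E₀ ≠ E₁ → E₀ ≠ E₂ → E₁ ≠ E₂ →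
    ∀ W ∈ Grass K V, Adjacent W E₀ → ¬ Distant W E₁ → ¬ Distant W E₂ →
      ∀ E ∈ R, ¬ Distant W E

open OrderDual

section Lattice

variable {α : Type*} [Lattice α] {a b c M N X Y Z W E₁ E₂ E₃ : α}

def LatticeAdjacent (a b : α) : Prop := a ⊓ b ⋖ a ∧ a ⊓ b ⋖ b

theorem LatticeAdjacent.symm (h : LatticeAdjacent a b) : LatticeAdjacent b a := by
  rw [LatticeAdjacent, inf_comm]
  exact ⟨h.2, h.1⟩

theorem LatticeAdjacent.not_le (h : LatticeAdjacent a b) : ¬a ≤ b := fun hab =>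
  h.1.ne (inf_eq_left.2 hab)

theorem latticeAdjacent_of_covBy_of_covBy (ha : c ⋖ a) (hb : c ⋖ b) (hab : a ≠ b) :
    LatticeAdjacent a b := by
  rw [LatticeAdjacent, ha.wcovBy.inf_eq hb.wcovBy hab]
  exact ⟨ha, hb⟩

theorem LatticeAdjacent.covBy_of_covBy_of_le (hXZ : LatticeAdjacent X Z) (hMX : M ⋖ X)
    (hMZ : M ≤ Z) : M ⋖ Z := by
  obtain h | h := hMX.wcovBy.eq_or_eq (le_inf hMX.le hMZ) inf_le_left
  · exact h ▸ hXZ.2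
  · exact absurd h hXZ.1.ne

theorem LatticeAdjacent.inf_le_or_le_sup (hXY : LatticeAdjacent X Y) (hZX : LatticeAdjacent Z X)
    (hZY : LatticeAdjacent Z Y) : X ⊓ Y ≤ Z ∨ Z ≤ X ⊔ Y := by
  refine or_iff_not_imp_left.2 fun hXYZ => ?_
  have hne : Z ⊓ X ≠ Z ⊓ Y := by
    intro h
    obtain h' | h' :=
      hZX.2.wcovBy.eq_or_eq (le_inf inf_le_right (h.le.trans inf_le_right)) inf_le_left
    · exact hXYZ (h' ▸ inf_le_left)
    · exact hXY.1.ne h'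
  calc Z = Z ⊓ X ⊔ Z ⊓ Y := (hZX.1.wcovBy.sup_eq hZY.1.wcovBy hne).symm
    _ ≤ X ⊔ Y := sup_le_sup inf_le_right inf_le_right

theorem le_of_latticeAdjacent_of_not_le_sup (h₁ : M ⋖ E₁) (h₂ : M ⋖ E₂) (h₃ : M ⋖ E₃)
    (h₁₂ : E₁ ≠ E₂) (h₃₁₂ : ¬E₃ ≤ E₁ ⊔ E₂) (hW₁ : LatticeAdjacent W E₁)
    (hW₂ : LatticeAdjacent W E₂) (hW₃ : LatticeAdjacent W E₃) : M ≤ W := by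
  obtain h | hW := (latticeAdjacent_of_covBy_of_covBy h₁ h₂ h₁₂).inf_le_or_le_sup hW₁ hW₂
  · rwa [h₁.wcovBy.inf_eq h₂.wcovBy h₁₂] at h
  by_contra hMW
  have hne : W ⊓ E₃ ≠ M := fun h => hMW (h ▸ inf_le_left)
  refine h₃₁₂ ?_
  rw [← hW₃.2.wcovBy.sup_eq h₃.wcovBy hne]
  exact sup_le (inf_le_left.trans hW) (h₁.le.trans le_sup_left)

theorem pairwise_latticeAdjacent_setOf_covBy (M : α) : {E | M ⋖ E}.Pairwise LatticeAdjacent :=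
  fun _ ha _ hb hab => latticeAdjacent_of_covBy_of_covBy ha hb hab

section Modular

variable [IsModularLattice α]

theorem latticeAdjacent_iff_covBy_sup : LatticeAdjacent a b ↔ a ⋖ a ⊔ b ∧ b ⋖ a ⊔ b :=
  ⟨fun h => ⟨covBy_sup_of_inf_covBy_right h.2, covBy_sup_of_inf_covBy_left h.1⟩,
    fun h => ⟨inf_covBy_of_covBy_sup_right h.2, inf_covBy_of_covBy_sup_left h.1⟩⟩

theorem latticeAdjacent_toDual_iff :
    LatticeAdjacent (toDual a) (toDual b) ↔ LatticeAdjacent a b := by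
  rw [LatticeAdjacent, ← toDual_sup, toDual_covBy_toDual_iff, toDual_covBy_toDual_iff,
    latticeAdjacent_iff_covBy_sup]

theorem LatticeAdjacent.covBy_of_covBy_of_le' (hXZ : LatticeAdjacent X Z) (hXN : X ⋖ N)
    (hZN : Z ≤ N) : Z ⋖ N :=
  toDual_covBy_toDual_iff.1 <|
    (latticeAdjacent_toDual_iff.2 hXZ).covBy_of_covBy_of_le (toDual_covBy_toDual_iff.2 hXN) hZN

theorem pairwise_latticeAdjacent_setOf_covBy' (N : α) : {E | E ⋖ N}.Pairwise LatticeAdjacent :=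
  fun _ ha _ hb hab => latticeAdjacent_toDual_iff.1 <|
    latticeAdjacent_of_covBy_of_covBy (toDual_covBy_toDual_iff.2 ha)
      (toDual_covBy_toDual_iff.2 hb) hab

/- If some `Z ∈ A` misses `X ⊓ Y`, then a member `W ≰ X ⊔ Y` would contain both `X ⊓ Y` and
`X ⊓ Z`, two distinct lower covers of `X`, and hence `X` itself. -/
theorem Set.Pairwise.forall_inf_le_or_forall_le_sup {A : Set α}
    (hA : A.Pairwise LatticeAdjacent) (hX : X ∈ A) (hY : Y ∈ A) (hXY : X ≠ Y) :
    (∀ Z ∈ A, X ⊓ Y ≤ Z) ∨ ∀ Z ∈ A, Z ≤ X ⊔ Y := by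
  refine or_iff_not_imp_left.2 fun h => ?_
  push Not at h
  obtain ⟨Z, hZ, hXYZ⟩ := h
  have hZX : Z ≠ X := fun h => hXYZ (h ▸ inf_le_left)
  have hZY : Z ≠ Y := fun h => hXYZ (h ▸ inf_le_right)
  have hZle : Z ≤ X ⊔ Y :=
    ((hA hX hY hXY).inf_le_or_le_sup (hA hZ hX hZX) (hA hZ hY hZY)).resolve_left hXYZ
  have hsup : X ⊔ Z = X ⊔ Y :=
    ((latticeAdjacent_iff_covBy_sup.1 (hA hX hY hXY)).1.wcovBy.eq_or_eq le_sup_left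
      (sup_le le_sup_left hZle)).resolve_left fun h => (hA hZ hX hZX).not_le (h ▸ le_sup_right)
  intro W hW
  by_contra hWle
  have hWX : W ≠ X := fun h => hWle (h ▸ le_sup_left)
  have hWY : W ≠ Y := fun h => hWle (h ▸ le_sup_right)
  have hWZ : W ≠ Z := fun h => hWle (h ▸ hZle)
  have hXY_W : X ⊓ Y ≤ W :=
    ((hA hX hY hXY).inf_le_or_le_sup (hA hW hX hWX) (hA hW hY hWY)).resolve_right hWle
  have hXZ_W : X ⊓ Z ≤ W :=
    ((hA hX hZ hZX.symm).inf_le_or_le_sup (hA hW hX hWX) (hA hW hZ hWZ)).resolve_right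
      (hsup ▸ hWle)
  have hne : X ⊓ Y ≠ X ⊓ Z := fun h => hXYZ (h ▸ inf_le_right)
  refine (hA hW hX hWX).symm.not_le ?_
  rw [← (hA hX hY hXY).1.wcovBy.sup_eq (hA hX hZ hZX.symm).1.wcovBy hne]
  exact sup_le hXY_W hXZ_W

theorem Set.Pairwise.forall_inf_covBy_or_forall_covBy_sup {A : Set α}
    (hA : A.Pairwise LatticeAdjacent) (hX : X ∈ A) (hY : Y ∈ A) (hXY : X ≠ Y) :
    (∀ Z ∈ A, X ⊓ Y ⋖ Z) ∨ ∀ Z ∈ A, Z ⋖ X ⊔ Y := by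
  have hXY' := hA hX hY hXY
  refine (hA.forall_inf_le_or_forall_le_sup hX hY hXY).imp (fun h Z hZ => ?_) (fun h Z hZ => ?_)
  · obtain rfl | hZX := eq_or_ne Z X
    · exact hXY'.1
    · exact (hA hX hZ hZX.symm).covBy_of_covBy_of_le hXY'.1 (h Z hZ)
  · obtain rfl | hZX := eq_or_ne Z X
    · exact (latticeAdjacent_iff_covBy_sup.1 hXY').1
    · exact (hA hX hZ hZX.symm).covBy_of_covBy_of_le' (latticeAdjacent_iff_covBy_sup.1 hXY').1
        (h Z hZ)

section Complemented

variable [BoundedOrder α] [ComplementedLattice α]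

theorem exists_covBy_not_le [IsAtomic α] (hMY : M ≤ Y) (hY : Y ≠ ⊤) : ∃ E, M ⋖ E ∧ ¬E ≤ Y := by
  obtain ⟨C, hC⟩ := exists_isCompl Y
  obtain ⟨p, hp, hpC⟩ :=
    (eq_bot_or_exists_atom_le C).resolve_left fun h => hY (eq_top_of_isCompl_bot (h ▸ hC))
  have hpY : ¬p ≤ Y := fun h => hp.1 (le_bot_iff.1 (hC.inf_eq_bot ▸ le_inf h hpC))
  have hpM : p ⊓ M = ⊥ :=
    (hp.le_iff.1 inf_le_left).resolve_right fun h => hpY ((h ▸ inf_le_right).trans hMY)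
  refine ⟨p ⊔ M, covBy_sup_of_inf_covBy_left (hpM ▸ hp.bot_covBy), fun h => hpY ?_⟩
  exact le_sup_left.trans h

theorem exists_covBy_not_ge [IsCoatomic α] (hYN : Y ≤ N) (hY : Y ≠ ⊥) :
    ∃ E, E ⋖ N ∧ ¬Y ≤ E := by
  obtain ⟨E, hNE, hEY⟩ := exists_covBy_not_le (α := αᵒᵈ) (M := toDual N) (Y := toDual Y) hYN hY
  exact ⟨ofDual E, ofDual_covBy_ofDual_iff.2 hNE, hEY⟩

theorem Set.Pairwise.subset_setOf_covBy [IsAtomic α] {B : Set α}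
    (hB : B.Pairwise LatticeAdjacent) (hMX : M ⋖ X) (hX : X ≠ ⊤) (hX' : ¬X ⋖ ⊤)
    (hsub : {E | M ⋖ E} ⊆ B) : B ⊆ {E | M ⋖ E} := by
  obtain ⟨E₂, hE₂, hE₂X⟩ := exists_covBy_not_le hMX.le hX
  have hXE₂ : X ≠ E₂ := fun h => hE₂X h.ge
  have hXE₂_top : X ⊔ E₂ ≠ ⊤ := fun h => hX' <| h ▸
    (latticeAdjacent_iff_covBy_sup.1 (latticeAdjacent_of_covBy_of_covBy hMX hE₂ hXE₂)).1
  obtain ⟨E₃, hE₃, hE₃X⟩ := exists_covBy_not_le (hMX.le.trans le_sup_left) hXE₂_top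
  intro W hW
  have hMW : M ≤ W := by
    by_contra hMW
    have hW_ne {E : α} (hE : M ⋖ E) : W ≠ E := fun h => hMW (h ▸ hE.le)
    exact hMW <| le_of_latticeAdjacent_of_not_le_sup hMX hE₂ hE₃ hXE₂ hE₃X
      (hB hW (hsub hMX) (hW_ne hMX)) (hB hW (hsub hE₂) (hW_ne hE₂)) (hB hW (hsub hE₃) (hW_ne hE₃))
  obtain rfl | hWX := eq_or_ne W X
  · exact hMX
  · exact (hB (hsub hMX) hW hWX.symm).covBy_of_covBy_of_le hMX hMW

theorem Set.Pairwise.subset_setOf_covBy' [IsCoatomic α] {B : Set α}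
    (hB : B.Pairwise LatticeAdjacent) (hXN : X ⋖ N) (hX : X ≠ ⊥) (hX' : ¬⊥ ⋖ X)
    (hsub : {E | E ⋖ N} ⊆ B) : B ⊆ {E | E ⋖ N} := by
  have hB' : (ofDual ⁻¹' B).Pairwise LatticeAdjacent := fun _ ha _ hb hab =>
    (latticeAdjacent_toDual_iff (α := α)).2 (hB ha hb hab)
  have := hB'.subset_setOf_covBy (M := toDual N) (X := toDual X) (toDual_covBy_toDual_iff.2 hXN)
    hX (fun h => hX' (toDual_covBy_toDual_iff.1 h))
    (fun E hE => hsub (ofDual_covBy_ofDual_iff.2 hE))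
  exact fun W hW => toDual_covBy_toDual_iff.1 (this hW)

end Complemented

end Modular

end Lattice

section Grassmannian

variable {M N E X Y : Submodule K V}

theorem quotRank_eq_one_iff_covBy (h : M ≤ E) : quotRank M E = 1 ↔ M ⋖ E := by
  rw [quotRank, Module.rank_eq_one_iff_finrank_eq_one, ← isSimpleModule_iff_finrank_eq_one,
    covBy_iff_quot_is_simple h]

theorem adjacent_eq_latticeAdjacent :
    (Adjacent : Submodule K V → Submodule K V → Prop) = LatticeAdjacent := by
  ext X Y
  rw [Adjacent, LatticeAdjacent, quotRank_eq_one_iff_covBy inf_le_left,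
    quotRank_eq_one_iff_covBy inf_le_right]

theorem isAdjClique_iff {A : Set (Submodule K V)} :
    IsAdjClique A ↔ A ⊆ Grass K V ∧ A.Pairwise LatticeAdjacent := by
  rw [IsAdjClique, adjacent_eq_latticeAdjacent]

theorem starSet_eq_setOf_covBy (M : Submodule K V) : starSet M = {E | M ⋖ E} :=
  Set.ext fun _ => ⟨fun h => (quotRank_eq_one_iff_covBy h.1).1 h.2,
    fun h => ⟨h.le, (quotRank_eq_one_iff_covBy h.le).2 h⟩⟩

theorem topSet_eq_setOf_covBy (N : Submodule K V) : topSet N = {E | E ⋖ N} :=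
  Set.ext fun _ => ⟨fun h => (quotRank_eq_one_iff_covBy h.1).1 h.2,
    fun h => ⟨h.le, (quotRank_eq_one_iff_covBy h.le).2 h⟩⟩

theorem isStarCentre_iff : IsStarCentre M ↔ ∃ X ∈ Grass K V, M ⋖ X :=
  exists_congr fun X => and_congr_right fun _ => Set.ext_iff.1 (starSet_eq_setOf_covBy M) X

theorem isTopCarrier_iff : IsTopCarrier N ↔ ∃ X ∈ Grass K V, X ⋖ N :=
  exists_congr fun X => and_congr_right fun _ => Set.ext_iff.1 (topSet_eq_setOf_covBy N) X

theorem quotRank_eq_rank_map (M E : Submodule K V) :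
    quotRank M E = Module.rank K (E.map M.mkQ) := by
  have hker : LinearMap.ker (M.mkQ ∘ₗ E.subtype) = M.comap E.subtype := by
    rw [LinearMap.ker_comp, Submodule.ker_mkQ]
  have hrange : LinearMap.range (M.mkQ ∘ₗ E.subtype) = E.map M.mkQ := by
    rw [LinearMap.range_comp, Submodule.range_subtype]
  have e := (M.mkQ ∘ₗ E.subtype).quotKerEquivRange
  rw [hker, hrange] at e
  exact e.rank_eq

theorem CovBy.rank_eq (h : M ⋖ E) : Module.rank K E = Module.rank K M + 1 := by
  have hsum := Submodule.rank_quotient_add_rank (M.comap E.subtype)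
  rw [(Submodule.comapSubtypeEquivOfLe h.le).rank_eq, ← quotRank,
    (quotRank_eq_one_iff_covBy h.le).2 h] at hsum
  rw [← hsum, add_comm]

theorem CovBy.rank_quotient_eq (h : M ⋖ E) :
    Module.rank K (V ⧸ M) = Module.rank K (V ⧸ E) + 1 := by
  have hsum := Submodule.rank_quotient_add_rank (E.map M.mkQ)
  rw [(Submodule.quotientQuotientEquivQuotient M E h.le).rank_eq, ← quotRank_eq_rank_map,
    (quotRank_eq_one_iff_covBy h.le).2 h] at hsum
  exact hsum.symm

theorem mem_grass_iff_rank_eq : X ∈ Grass K V ↔ Module.rank K X = Module.rank K (V ⧸ X) :=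
  Module.nonempty_linearEquiv_iff_rank_eq

theorem LatticeAdjacent.mem_grass_iff (h : LatticeAdjacent X Y) :
    X ∈ Grass K V ↔ Y ∈ Grass K V := by
  have hsup := latticeAdjacent_iff_covBy_sup.1 h
  rw [mem_grass_iff_rank_eq, mem_grass_iff_rank_eq, h.1.rank_eq, h.2.rank_eq,
    hsup.1.rank_quotient_eq, hsup.2.rank_quotient_eq]

theorem setOf_covBy_subset_grass (hX : X ∈ Grass K V) (hMX : M ⋖ X) :
    {E | M ⋖ E} ⊆ Grass K V := fun E hE => by
  obtain rfl | hEX := eq_or_ne E X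
  · exact hX
  · exact (latticeAdjacent_of_covBy_of_covBy hMX hE hEX.symm).mem_grass_iff.1 hX

theorem setOf_covBy_subset_grass' (hX : X ∈ Grass K V) (hXN : X ⋖ N) :
    {E | E ⋖ N} ⊆ Grass K V := fun E hE => by
  obtain rfl | hEX := eq_or_ne E X
  · exact hX
  · exact (pairwise_latticeAdjacent_setOf_covBy' N hXN hE hEX.symm).mem_grass_iff.1 hX

theorem two_le_rank_of_mem_grass (hV : 2 < Module.rank K V) (hX : X ∈ Grass K V) :
    2 ≤ Module.rank K X := by
  have hsum := X.rank_quotient_add_rank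
  rw [← mem_grass_iff_rank_eq.1 hX] at hsum
  by_contra! h
  obtain ⟨n, hn⟩ := Cardinal.lt_aleph0.1 (h.trans Cardinal.natCast_lt_aleph0)
  rw [hn] at h hsum
  rw [← hsum] at hV
  norm_cast at h hV
  omega

theorem two_le_rank_quotient_of_mem_grass (hV : 2 < Module.rank K V) (hX : X ∈ Grass K V) :
    2 ≤ Module.rank K (V ⧸ X) :=
  mem_grass_iff_rank_eq.1 hX ▸ two_le_rank_of_mem_grass hV hX

theorem ne_bot_of_mem_grass (hV : 2 < Module.rank K V) (hX : X ∈ Grass K V) : X ≠ ⊥ := by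
  rintro rfl
  simpa using two_le_rank_of_mem_grass hV hX

theorem not_bot_covBy_of_mem_grass (hV : 2 < Module.rank K V) (hX : X ∈ Grass K V) :
    ¬⊥ ⋖ X := fun h => by
  simpa [h.rank_eq] using two_le_rank_of_mem_grass hV hX

theorem ne_top_of_mem_grass (hV : 2 < Module.rank K V) (hX : X ∈ Grass K V) : X ≠ ⊤ := by
  rintro rfl
  simpa using two_le_rank_quotient_of_mem_grass hV hX

theorem not_covBy_top_of_mem_grass (hV : 2 < Module.rank K V) (hX : X ∈ Grass K V) :
    ¬X ⋖ ⊤ := fun h => by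
  simpa [h.rank_quotient_eq] using two_le_rank_quotient_of_mem_grass hV hX

end Grassmannian

section Cliques

variable {M N X : Submodule K V} {A : Set (Submodule K V)}

theorem isAdjClique_starSet (hM : IsStarCentre M) : IsAdjClique (starSet M) := by
  obtain ⟨X, hX, hMX⟩ := isStarCentre_iff.1 hM
  rw [isAdjClique_iff, starSet_eq_setOf_covBy]
  exact ⟨setOf_covBy_subset_grass hX hMX, pairwise_latticeAdjacent_setOf_covBy M⟩

theorem isAdjClique_topSet (hN : IsTopCarrier N) : IsAdjClique (topSet N) := by
  obtain ⟨X, hX, hXN⟩ := isTopCarrier_iff.1 hN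
  rw [isAdjClique_iff, topSet_eq_setOf_covBy]
  exact ⟨setOf_covBy_subset_grass' hX hXN, pairwise_latticeAdjacent_setOf_covBy' N⟩

theorem isMaxAdjClique_starSet (hV : 2 < Module.rank K V) (hM : IsStarCentre M) :
    IsMaxAdjClique (starSet M) := by
  refine ⟨isAdjClique_starSet hM, fun B hB hsub => hsub.antisymm ?_⟩
  obtain ⟨X, hX, hMX⟩ := isStarCentre_iff.1 hM
  rw [starSet_eq_setOf_covBy] at hsub ⊢
  exact (isAdjClique_iff.1 hB).2.subset_setOf_covBy hMX (ne_top_of_mem_grass hV hX)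
    (not_covBy_top_of_mem_grass hV hX) hsub

theorem isMaxAdjClique_topSet (hV : 2 < Module.rank K V) (hN : IsTopCarrier N) :
    IsMaxAdjClique (topSet N) := by
  refine ⟨isAdjClique_topSet hN, fun B hB hsub => hsub.antisymm ?_⟩
  obtain ⟨X, hX, hXN⟩ := isTopCarrier_iff.1 hN
  rw [topSet_eq_setOf_covBy] at hsub ⊢
  exact (isAdjClique_iff.1 hB).2.subset_setOf_covBy' hXN (ne_bot_of_mem_grass hV hX)
    (not_bot_covBy_of_mem_grass hV hX) hsub

theorem IsAdjClique.exists_subset_starSet_or_topSet (hV : 2 < Module.rank K V)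
    (hA : IsAdjClique A) (hX : X ∈ A) :
    (∃ M, M ⋖ X ∧ A ⊆ starSet M) ∨ ∃ N, X ⋖ N ∧ A ⊆ topSet N := by
  rw [isAdjClique_iff] at hA
  simp only [starSet_eq_setOf_covBy, topSet_eq_setOf_covBy]
  by_cases hsingle : ∀ Y ∈ A, Y = X
  · obtain ⟨M, hMX, -⟩ := exists_covBy_not_ge le_rfl (ne_bot_of_mem_grass hV (hA.1 hX))
    exact Or.inl ⟨M, hMX, fun Y hY => hsingle Y hY ▸ hMX⟩
  push Not at hsingle
  obtain ⟨Y, hY, hYX⟩ := hsingle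
  have hXY := hA.2 hX hY hYX.symm
  exact (hA.2.forall_inf_covBy_or_forall_covBy_sup hX hY hYX.symm).imp
    (fun h => ⟨X ⊓ Y, hXY.1, h⟩) (fun h => ⟨X ⊔ Y, (latticeAdjacent_iff_covBy_sup.1 hXY).1, h⟩)

theorem IsMaxAdjClique.nonempty (hG : (Grass K V).Nonempty) (hA : IsMaxAdjClique A) :
    A.Nonempty := by
  obtain ⟨X, hX⟩ := hG
  refine Set.nonempty_iff_ne_empty.2 fun hA₀ => Set.singleton_ne_empty X ?_
  have hX_clique : IsAdjClique {X} := ⟨Set.singleton_subset_iff.2 hX, Set.pairwise_singleton _ _⟩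
  rw [← hA₀, hA.2 _ hX_clique (hA₀ ▸ Set.empty_subset _)]

end Cliques

/-- Proposition 2.4. The maximal adjacency cliques of `𝒢` are
precisely the stars and the tops. -/
theorem maxAdjClique_iff_star_or_top (hV : 2 < Module.rank K V) (hG : (Grass K V).Nonempty)
    (A : Set (Submodule K V)) :
    IsMaxAdjClique A ↔
      ((∃ M : Submodule K V, IsStarCentre M ∧ A = starSet M) ∨
       (∃ N : Submodule K V, IsTopCarrier N ∧ A = topSet N)) := by
  constructor
  · intro hA
    obtain ⟨X, hX⟩ := hA.nonempty hG
    have hXG : X ∈ Grass K V := hA.1.1 hX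
    rcases hA.1.exists_subset_starSet_or_topSet hV hX with ⟨M, hMX, hAM⟩ | ⟨N, hXN, hAN⟩
    · have hM : IsStarCentre M := isStarCentre_iff.2 ⟨X, hXG, hMX⟩
      exact Or.inl ⟨M, hM, hA.2 _ (isAdjClique_starSet hM) hAM⟩
    · have hN : IsTopCarrier N := isTopCarrier_iff.2 ⟨X, hXG, hXN⟩
      exact Or.inr ⟨N, hN, hA.2 _ (isAdjClique_topSet hN) hAN⟩
  · rintro (⟨M, hM, rfl⟩ | ⟨N, hN, rfl⟩)
    · exact isMaxAdjClique_starSet hV hM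
    · exact isMaxAdjClique_topSet hV hN
end

section
/- If dim V > 2, then no subset of the set of subspaces of V is simultaneously a star and a top; i.e. for every star 𝒢[M⟩ and every top 𝒢⟨N], 𝒢[M⟩ ≠ 𝒢⟨N]. -/
variable {K V : Type*} [DivisionRing K] [AddCommGroup V] [Module K V]

lemma quotRank_eq_one_of (M E : Submodule K V) (v : V) (hvE : v ∈ E) (hvM : v ∉ M)
    (hle : E ≤ M ⊔ Submodule.span K {v}) : quotRank M E = 1 := by
  set M' := M.comap E.subtype with hM'
  refine rank_eq_one (Submodule.Quotient.mk (⟨v, hvE⟩ : E)) ?_ ?_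
  · intro h
    rw [Submodule.Quotient.mk_eq_zero] at h
    exact hvM h
  · intro w
    obtain ⟨⟨x, hxE⟩, rfl⟩ := Submodule.Quotient.mk_surjective _ w
    obtain ⟨m, hm, z, hz, hmz⟩ := Submodule.mem_sup.mp (hle hxE)
    obtain ⟨c, rfl⟩ := Submodule.mem_span_singleton.mp hz
    refine ⟨c, ?_⟩
    rw [← Submodule.Quotient.mk_smul, Submodule.Quotient.eq]
    have : (c • (⟨v, hvE⟩ : E) - ⟨x, hxE⟩ : E) = ⟨c • v - x, sub_mem (E.smul_mem c hvE) hxE⟩ := rfl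
    rw [this]
    show c • v - x ∈ M
    rw [← hmz]
    simpa using hm

lemma quotRank_bot (X : Submodule K V) : quotRank ⊥ X = Module.rank K X := by
  have h : (⊥ : Submodule K V).comap X.subtype = ⊥ := by
    ext x; simp [Submodule.mem_comap]
  rw [quotRank, h]
  exact (Submodule.quotEquivOfEqBot ⊥ rfl).rank_eq

/-- No set of subspaces of `V` is simultaneously a star and a top. -/
theorem star_ne_top (hV : 2 < Module.rank K V)
    (M N : Submodule K V) (hM : IsStarCentre M) (hN : IsTopCarrier N) :
    starSet M ≠ topSet N := by
  intro heq
  obtain ⟨X, hXG, hMX, hMX1⟩ := hM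
  have hXstar : X ∈ starSet M := ⟨hMX, hMX1⟩
  have hXtop : X ∈ topSet N := heq ▸ hXstar
  have hMN : M ≤ N := hMX.trans hXtop.1
  -- M ≠ ⊥
  have hMbot : M ≠ ⊥ := by
    rintro rfl
    have h1 : Module.rank K X = 1 := by rw [← quotRank_bot X]; exact hMX1
    obtain ⟨e⟩ := hXG
    have h2 : Module.rank K (V ⧸ X) = 1 := by rw [← e.rank_eq]; exact h1
    have h3 := Submodule.rank_quotient_add_rank X
    rw [h1, h2, one_add_one_eq_two] at h3
    rw [← h3] at hV
    exact lt_irrefl _ hV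
  by_cases hN' : N = ⊤
  · obtain ⟨m, hmM, hm0⟩ := Submodule.exists_mem_ne_zero_of_ne_bot hMbot
    obtain ⟨E, hE⟩ := Submodule.exists_isCompl (Submodule.span K {m})
    have hmE : m ∉ E := by
      intro hmE
      have : m ∈ Submodule.span K {m} ⊓ E :=
        ⟨Submodule.mem_span_singleton_self m, hmE⟩
      rw [hE.inf_eq_bot] at this
      exact hm0 this
    have hsup : (⊤ : Submodule K V) ≤ E ⊔ Submodule.span K {m} := by
      rw [sup_comm, hE.sup_eq_top]
    have hEtop : E ∈ topSet N := by
      subst hN'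
      exact ⟨le_top, quotRank_eq_one_of E ⊤ m trivial hmE hsup⟩
    have hEstar : E ∈ starSet M := heq ▸ hEtop
    exact hmE (hEstar.1 hmM)
  · obtain ⟨v, hvN⟩ : ∃ v, v ∉ N := by
      by_contra h
      push_neg at h
      exact hN' (eq_top_iff.mpr fun x _ => h x)
    have hvM : v ∉ M := fun h => hvN (hMN h)
    have hvE : v ∈ M ⊔ Submodule.span K {v} :=
      (le_sup_right : Submodule.span K {v} ≤ _) (Submodule.mem_span_singleton_self v)
    have hEstar : M ⊔ Submodule.span K {v} ∈ starSet M :=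
      ⟨le_sup_left, quotRank_eq_one_of M _ v hvE hvM le_rfl⟩
    have hEtop : M ⊔ Submodule.span K {v} ∈ topSet N := heq ▸ hEstar
    exact hvN (hEtop.1 hvE)
end

section
/- Given any three mutually distant elements of 𝒢, there is a unique Z-regulus containing them. -/
variable {K V : Type*} [DivisionRing K] [AddCommGroup V] [Module K V]

open Submodule

lemma mem_grass_of_isCompl {X Y : Submodule K V} (h : IsCompl X Y) (hY : Y ∈ Grass K V) :
    X ∈ Grass K V := by
  obtain ⟨e⟩ := hY
  exact ⟨(Y.quotientEquivOfIsCompl X h.symm).symm ≪≫ₗ e.symm ≪≫ₗ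
    (X.quotientEquivOfIsCompl Y h).symm⟩

lemma Distant.ne [Nontrivial V] {X Y : Submodule K V} (h : Distant X Y) : X ≠ Y := by
  rintro rfl
  exact bot_ne_top ((disjoint_self.mp h.disjoint).symm.trans (codisjoint_self.mp h.codisjoint))

lemma finrank_ne_one_of_mem_grass (hV : 2 < Module.rank K V) {X : Submodule K V}
    (hX : X ∈ Grass K V) : Module.finrank K X ≠ 1 := by
  obtain ⟨e⟩ := hX
  intro h1
  have hX1 : Module.rank K X = 1 := Module.rank_eq_one_iff_finrank_eq_one.mpr h1
  have := X.rank_quotient_add_rank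
  rw [← e.rank_eq, hX1, one_add_one_eq_two] at this
  exact hV.ne' this.symm

lemma meets_iff {L X : Submodule K V} : Meets L X ↔ ∃ x ∈ L, x ∈ X ∧ x ≠ 0 := by
  simp [Meets, Submodule.ne_bot_iff, mem_inf, and_assoc]

lemma isLine_span_pair {x y : V} (h : LinearIndependent K ![x, y]) :
    IsLine (span K {x, y}) := by
  have := rank_span h
  rw [Matrix.range_cons, Matrix.range_cons, Matrix.range_empty, Set.union_empty,
    Set.singleton_union] at this
  have hxy : x ≠ y := fun e => by simpa using LinearIndependent.pair_iff.mp h 1 (-1) (by simp [e])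
  rw [IsLine, this, Cardinal.mk_insert (Set.mem_singleton_iff.not.mpr hxy), Cardinal.mk_singleton,
    one_add_one_eq_two]

lemma IsLine.eq_of_le {L M : Submodule K V} (hL : IsLine L) (hM : IsLine M) (h : M ≤ L) :
    M = L := by
  have hL2 : Module.rank K L = (2 : ℕ) := hL
  have hM2 : Module.rank K M = (2 : ℕ) := hM
  have := Module.finite_of_rank_eq_nat hL2
  exact eq_of_le_of_finrank_eq h
    (by rw [Module.finrank_eq_of_rank_eq hL2, Module.finrank_eq_of_rank_eq hM2])

lemma IsLine.span_pair_eq {L : Submodule K V} (hL : IsLine L) {x y : V} (hx : x ∈ L) (hy : y ∈ L)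
    (h : LinearIndependent K ![x, y]) : span K {x, y} = L :=
  hL.eq_of_le (isLine_span_pair h)
    (span_le.mpr (Set.insert_subset hx (Set.singleton_subset_iff.mpr hy)))

lemma exists_eq_smul_of_forall_exists_smul {W₀ W₁ : Type*} [AddCommGroup W₀] [Module K W₀]
    [AddCommGroup W₁] [Module K W₁] {f g : W₀ →ₗ[K] W₁} (hf : Function.Bijective f)
    (hW₁ : Module.finrank K W₁ ≠ 1) (hg : ∀ v, ∃ b : K, g v = b • f v) :
    ∃ c : Subring.center K, g = c • f := by
  set e := LinearEquiv.ofBijective f hf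
  have hdep : ∀ w, ¬ LinearIndependent K ![w, (g ∘ₗ e.symm.toLinearMap) w] := by
    intro w hw
    obtain ⟨b, hb⟩ := hg (e.symm w)
    have hfe : f (e.symm w) = w := e.apply_symm_apply w
    rw [LinearMap.comp_apply, LinearEquiv.coe_coe, hb, hfe] at hw
    simpa using LinearIndependent.pair_iff.mp hw b (-1) (by simp)
  obtain ⟨c, hc⟩ :=
    LinearMap.exists_mem_center_apply_eq_smul_of_forall_notLinearIndependent hW₁ hdep
  refine ⟨c, LinearMap.ext fun v => ?_⟩
  simpa [e] using LinearMap.congr_fun hc (f v)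

section Graph

variable {E₀ E₁ : Submodule K V}

lemma add_eq_add_iff_of_isCompl (h : IsCompl E₀ E₁) {v v' : E₀} {w w' : E₁} :
    (v : V) + w = v' + w' ↔ v = v' ∧ w = w' := by
  rw [← coe_prodEquivOfIsCompl' E₀ E₁ h (v, w), ← coe_prodEquivOfIsCompl' E₀ E₁ h (v', w'),
    (prodEquivOfIsCompl E₀ E₁ h).injective.eq_iff, Prod.mk.injEq]

lemma add_eq_zero_iff_of_isCompl (h : IsCompl E₀ E₁) {v : E₀} {w : E₁} :
    (v : V) + w = 0 ↔ v = 0 ∧ w = 0 := by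
  simpa using add_eq_add_iff_of_isCompl h (v' := 0) (w' := 0)

def graphOf (g : E₀ →ₗ[K] E₁) : Submodule K V :=
  LinearMap.range (E₀.subtype + E₁.subtype ∘ₗ g)

lemma add_mem_graphOf (g : E₀ →ₗ[K] E₁) (v : E₀) : (v : V) + g v ∈ graphOf g :=
  ⟨v, rfl⟩

@[simp]
lemma graphOf_zero : graphOf (0 : E₀ →ₗ[K] E₁) = E₀ := by
  simp [graphOf]

lemma isCompl_graphOf_right (h : IsCompl E₀ E₁) (g : E₀ →ₗ[K] E₁) : IsCompl (graphOf g) E₁ := by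
  constructor
  · rw [disjoint_def]
    rintro _ ⟨v, rfl⟩ hw
    have hv : (v : V) ∈ E₁ := by simpa using sub_mem hw (g v).2
    obtain rfl : v = 0 := Subtype.ext (disjoint_def.mp h.disjoint _ v.2 hv)
    simp
  · rw [codisjoint_iff_le_sup, ← h.sup_eq_top]
    refine sup_le (fun v hv => ?_) le_sup_right
    simpa using sub_mem (mem_sup_left (add_mem_graphOf g ⟨v, hv⟩))
      (mem_sup_right (g ⟨v, hv⟩).2)

lemma exists_graphOf_eq (h : IsCompl E₀ E₁) {X : Submodule K V} (hX : IsCompl X E₁) :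
    ∃ g : E₀ →ₗ[K] E₁, graphOf g = X := by
  set g := -(E₁.projectionOnto X hX.symm ∘ₗ E₀.subtype)
  have hle : graphOf g ≤ X := by
    rintro _ ⟨v, rfl⟩
    simpa [g, ← sub_eq_add_neg, ← coe_projectionOnto_apply] using
      sub_projection_mem hX.symm (v : V)
  refine ⟨g, eq_of_le_of_inf_le_of_sup_le (z := E₁) hle ?_ ?_⟩
  · simp [hX.inf_eq_bot]
  · simp [(isCompl_graphOf_right h g).sup_eq_top]

lemma disjoint_graphOf_iff (h : IsCompl E₀ E₁) {g g' : E₀ →ₗ[K] E₁} :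
    Disjoint (graphOf g) (graphOf g') ↔ Function.Injective (g' - g) := by
  rw [disjoint_def, injective_iff_map_eq_zero]
  constructor
  · intro H v hv
    have hgv : g' v = g v := sub_eq_zero.mp hv
    exact ((add_eq_zero_iff_of_isCompl h).mp
      (H _ (add_mem_graphOf g v) (hgv ▸ add_mem_graphOf g' v))).1
  · rintro H _ ⟨v, rfl⟩ ⟨u, hu⟩
    obtain ⟨rfl, hgv⟩ := (add_eq_add_iff_of_isCompl h).mp hu
    simp [H _ (sub_eq_zero.mpr hgv)]

lemma codisjoint_graphOf_iff (h : IsCompl E₀ E₁) {g g' : E₀ →ₗ[K] E₁} :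
    Codisjoint (graphOf g) (graphOf g') ↔ Function.Surjective (g' - g) := by
  rw [codisjoint_iff_le_sup]
  constructor
  · intro H w
    obtain ⟨_, ⟨a, rfl⟩, _, ⟨b, rfl⟩, hab⟩ := mem_sup.mp (H (mem_top (x := (w : V))))
    have hab' : ((a + b : E₀) : V) + (g a + g' b : E₁) = (0 : E₀) + w := by
      simpa [add_add_add_comm] using hab
    obtain ⟨hba, hw⟩ := (add_eq_add_iff_of_isCompl h).mp hab'
    refine ⟨b, ?_⟩
    rw [eq_neg_of_add_eq_zero_left hba] at hw
    simp [← hw, sub_eq_neg_add]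
  · intro H
    have hE₁ : E₁ ≤ graphOf g ⊔ graphOf g' := by
      intro w hw
      obtain ⟨b, hb⟩ := H ⟨w, hw⟩
      have : w = ((b : V) + g' b) - ((b : V) + g b) := by
        have hb' : (g' b : V) - g b = w := by simpa using congrArg Subtype.val hb
        rw [← hb']; abel
      rw [this]
      exact sub_mem (mem_sup_right (add_mem_graphOf g' b)) (mem_sup_left (add_mem_graphOf g b))
    rw [← h.sup_eq_top]
    refine sup_le (fun v hv => ?_) hE₁
    simpa using sub_mem (mem_sup_left (add_mem_graphOf g ⟨v, hv⟩)) (hE₁ (g ⟨v, hv⟩).2)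

lemma isCompl_graphOf_iff (h : IsCompl E₀ E₁) {g g' : E₀ →ₗ[K] E₁} :
    IsCompl (graphOf g) (graphOf g') ↔ Function.Bijective (g' - g) := by
  rw [isCompl_iff, disjoint_graphOf_iff h, codisjoint_graphOf_iff h, Function.Bijective]

lemma meets_graphOf_iff (h : IsCompl E₀ E₁) {L : Submodule K V} {g : E₀ →ₗ[K] E₁} :
    Meets L (graphOf g) ↔ ∃ v : E₀, v ≠ 0 ∧ (v : V) + g v ∈ L := by
  rw [meets_iff]
  constructor
  · rintro ⟨_, hx, ⟨v, rfl⟩, hx0⟩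
    exact ⟨v, by rintro rfl; simp at hx0, hx⟩
  · rintro ⟨v, hv, hx⟩
    exact ⟨_, hx, add_mem_graphOf g v, fun h0 => hv ((add_eq_zero_iff_of_isCompl h).mp h0).1⟩

lemma add_apply_smul_mem_iff {L : Submodule K V} {g : E₀ →ₗ[K] E₁} {a : K} (ha : a ≠ 0)
    {v : E₀} : ((a • v : E₀) : V) + g (a • v) ∈ L ↔ (v : V) + g v ∈ L := by
  rw [map_smul, coe_smul, coe_smul, ← smul_add, smul_mem_iff L ha]

end Graph

section Regulus

variable {E₀ E₁ : Submodule K V} (f : E₀ →ₗ[K] E₁)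

def transversal (v : E₀) : Submodule K V :=
  span K {(v : V), (f v : V)}

def regulus : Set (Submodule K V) :=
  insert E₁ (Set.range fun c : Subring.center K => graphOf (c • f))

variable {f}

lemma graphOf_mem_regulus (c : Subring.center K) : graphOf (c • f) ∈ regulus f :=
  Set.mem_insert_of_mem _ ⟨c, rfl⟩

lemma isLine_transversal (h : IsCompl E₀ E₁) (hf : Function.Injective f) {v : E₀} (hv : v ≠ 0) :
    IsLine (transversal f v) := by
  refine isLine_span_pair (LinearIndependent.pair_iff.mpr fun s t hst => ?_)
  rw [← coe_smul, ← coe_smul, add_eq_zero_iff_of_isCompl h, smul_eq_zero, smul_eq_zero,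
    map_eq_zero_iff f hf] at hst
  exact ⟨hst.1.resolve_right hv, hst.2.resolve_right hv⟩

lemma transversal_meets (h : IsCompl E₀ E₁) (hf : Function.Injective f) {v : E₀} (hv : v ≠ 0)
    {X : Submodule K V} (hX : X ∈ regulus f) : Meets (transversal f v) X := by
  rcases hX with rfl | ⟨c, rfl⟩
  · refine meets_iff.mpr ⟨f v, subset_span (by simp), (f v).2, ?_⟩
    simpa using (map_ne_zero_iff f hf).mpr hv
  · refine (meets_graphOf_iff h).mpr ⟨v, hv, mem_span_pair.mpr ⟨1, c, ?_⟩⟩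
    simp [Subring.smul_def]

lemma isCompl_graphOf_smul (h : IsCompl E₀ E₁) (hf : Function.Bijective f)
    {c c' : Subring.center K} (hcc : c ≠ c') :
    IsCompl (graphOf (c • f)) (graphOf (c' • f)) := by
  have hd : ((c' : K) - c) ≠ 0 := sub_ne_zero.mpr (Subtype.coe_injective.ne hcc.symm)
  have hfun : ⇑(c' • f - c • f) = (fun w : E₁ => ((c' : K) - c) • w) ∘ f := by
    ext v; simp [Subring.smul_def, sub_smul]
  rw [isCompl_graphOf_iff h, hfun]
  exact (IsUnit.smul_bijective (Ne.isUnit hd)).comp hf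

lemma regulus_subset_grass (h : IsCompl E₀ E₁) (h₁ : E₁ ∈ Grass K V) : regulus f ⊆ Grass K V := by
  rintro X (rfl | ⟨c, rfl⟩)
  exacts [h₁, mem_grass_of_isCompl (isCompl_graphOf_right h _) h₁]

lemma regulus_pairwise_distant (h : IsCompl E₀ E₁) (hf : Function.Bijective f) :
    (regulus f).Pairwise Distant := by
  rintro X (rfl | ⟨c, rfl⟩) Y (rfl | ⟨c', rfl⟩) hXY
  · exact absurd rfl hXY
  · exact (isCompl_graphOf_right h _).symm
  · exact isCompl_graphOf_right h _
  · exact isCompl_graphOf_smul h hf fun hcc => hXY (hcc ▸ rfl)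

lemma transversal_eq_of_add_mem (h : IsCompl E₀ E₁) (hf : Function.Injective f)
    {L : Submodule K V} (hL : IsLine L) {v : E₀} (hv : v ≠ 0) {c c' : Subring.center K}
    (hcc : c ≠ c') (hc : (v : V) + (c • f) v ∈ L) (hc' : (v : V) + (c' • f) v ∈ L) :
    transversal f v = L := by
  have hd : ((c : K) - c') ≠ 0 := sub_ne_zero.mpr (Subtype.coe_injective.ne hcc)
  have hfv : (f v : V) ∈ L := by
    rw [← smul_mem_iff L hd]
    simpa [Subring.smul_def, sub_smul] using sub_mem hc hc'
  have hvL : (v : V) ∈ L := by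
    simpa [Subring.smul_def] using sub_mem hc (L.smul_mem (c : K) hfv)
  refine hL.eq_of_le (isLine_transversal h hf hv) (span_le.mpr ?_)
  exact Set.insert_subset hvL (Set.singleton_subset_iff.mpr hfv)

lemma exists_transversal_eq_of_meets_right (h : IsCompl E₀ E₁) (hf : Function.Injective f)
    {L : Submodule K V} (hL : IsLine L) {c c' : Subring.center K} (hcc : c ≠ c')
    (hE : Meets L E₁) (hc : Meets L (graphOf (c • f))) (hc' : Meets L (graphOf (c' • f))) :
    ∃ v, v ≠ 0 ∧ transversal f v = L := by
  obtain ⟨w, hwL, hwE, hw0⟩ := meets_iff.mp hE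
  obtain ⟨v, hv, hx⟩ := (meets_graphOf_iff h).mp hc
  obtain ⟨u, hu, hy⟩ := (meets_graphOf_iff h).mp hc'
  lift w to E₁ using hwE
  replace hw0 : w ≠ 0 := by rintro rfl; simp at hw0
  have hind : LinearIndependent K ![(v : V) + (c • f) v, w] := by
    refine LinearIndependent.pair_iff.mpr fun s t hst => ?_
    have hst' : ((s • v : E₀) : V) + (s • (c • f) v + t • w : E₁) = 0 := by
      simpa [smul_add, add_assoc] using hst
    obtain ⟨hs, ht⟩ := (add_eq_zero_iff_of_isCompl h).mp hst'
    have hs0 : s = 0 := (smul_eq_zero.mp hs).resolve_right hv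
    subst hs0
    simpa [hw0] using ht
  obtain ⟨a, b, hab⟩ := mem_span_pair.mp ((hL.span_pair_eq hx hwL hind).symm ▸ hy)
  have hab' : ((a • v : E₀) : V) + (a • (c • f) v + b • w : E₁) = u + (c' • f) u := by
    simpa [smul_add, add_assoc] using hab
  obtain ⟨rfl, -⟩ := (add_eq_add_iff_of_isCompl h).mp hab'
  have ha : a ≠ 0 := by rintro rfl; simp at hu
  exact ⟨v, hv, transversal_eq_of_add_mem h hf hL hv hcc hx ((add_apply_smul_mem_iff ha).mp hy)⟩

lemma exists_smul_eq_of_add_apply_mem (h : IsCompl E₀ E₁) (hf : Function.Injective f)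
    {L : Submodule K V} (hL : IsLine L) {c₀ c₁ c₂ : Subring.center K} (h02 : c₀ ≠ c₂)
    (h12 : c₁ ≠ c₂) {v₀ v₁ v₂ : E₀} (hv₀ : v₀ ≠ 0) (hv₂ : v₂ ≠ 0)
    (hx₀ : (v₀ : V) + (c₀ • f) v₀ ∈ L) (hx₁ : (v₁ : V) + (c₁ • f) v₁ ∈ L)
    (hx₂ : (v₂ : V) + (c₂ • f) v₂ ∈ L) : ∃ a : K, a • v₀ = v₁ := by
  by_contra hdep
  have hind₀ : LinearIndependent K ![v₀, v₁] :=
    (LinearIndependent.pair_iff' hv₀).mpr fun a ha => hdep ⟨a, ha⟩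
  have hind : LinearIndependent K ![(v₀ : V) + (c₀ • f) v₀, (v₁ : V) + (c₁ • f) v₁] := by
    refine LinearIndependent.pair_iff.mpr fun s t hst => LinearIndependent.pair_iff.mp hind₀ s t ?_
    have hst' : ((s • v₀ + t • v₁ : E₀) : V) + (s • (c₀ • f) v₀ + t • (c₁ • f) v₁ : E₁) = 0 := by
      simp only [coe_add, coe_smul, smul_add] at hst ⊢
      rw [← hst]; abel
    exact ((add_eq_zero_iff_of_isCompl h).mp hst').1
  obtain ⟨a, b, hab⟩ := mem_span_pair.mp ((hL.span_pair_eq hx₀ hx₁ hind).symm ▸ hx₂)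
  have hab' : ((a • v₀ + b • v₁ : E₀) : V) + (a • (c₀ • f) v₀ + b • (c₁ • f) v₁ : E₁) =
      v₂ + (c₂ • f) v₂ := by
    simp only [coe_add, coe_smul, smul_add] at hab ⊢
    rw [← hab]; abel
  obtain ⟨rfl, hE₁⟩ := (add_eq_add_iff_of_isCompl h).mp hab'
  have hzero : (a * ((c₀ : K) - c₂)) • v₀ + (b * ((c₁ : K) - c₂)) • v₁ = 0 := by
    apply hf
    simp only [map_add, map_smul, LinearMap.smul_apply, Subring.smul_def] at hE₁ ⊢
    rw [map_zero, mul_sub, mul_sub, sub_smul, sub_smul, mul_smul, mul_smul, mul_smul, mul_smul,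
      sub_add_sub_comm, hE₁, sub_self]
  obtain ⟨ha, hb⟩ := LinearIndependent.pair_iff.mp hind₀ _ _ hzero
  rw [mul_eq_zero, or_iff_left (sub_ne_zero.mpr (Subtype.coe_injective.ne h02))] at ha
  rw [mul_eq_zero, or_iff_left (sub_ne_zero.mpr (Subtype.coe_injective.ne h12))] at hb
  simp [ha, hb] at hv₂

lemma exists_transversal_eq_of_meets_three_graphOf (h : IsCompl E₀ E₁) (hf : Function.Injective f)
    {L : Submodule K V} (hL : IsLine L) {c₀ c₁ c₂ : Subring.center K}
    (h01 : c₀ ≠ c₁) (h02 : c₀ ≠ c₂) (h12 : c₁ ≠ c₂) (m₀ : Meets L (graphOf (c₀ • f)))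
    (m₁ : Meets L (graphOf (c₁ • f))) (m₂ : Meets L (graphOf (c₂ • f))) :
    ∃ v, v ≠ 0 ∧ transversal f v = L := by
  obtain ⟨v₀, hv₀, hx₀⟩ := (meets_graphOf_iff h).mp m₀
  obtain ⟨v₁, hv₁, hx₁⟩ := (meets_graphOf_iff h).mp m₁
  obtain ⟨v₂, hv₂, hx₂⟩ := (meets_graphOf_iff h).mp m₂
  obtain ⟨a, rfl⟩ := exists_smul_eq_of_add_apply_mem h hf hL h02 h12 hv₀ hv₂ hx₀ hx₁ hx₂
  have ha : a ≠ 0 := by rintro rfl; simp at hv₁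
  exact ⟨v₀, hv₀,
    transversal_eq_of_add_mem h hf hL hv₀ h01 hx₀ ((add_apply_smul_mem_iff ha).mp hx₁)⟩

lemma meetsThreeMeetsAll_regulus (h : IsCompl E₀ E₁) (hf : Function.Injective f) :
    MeetsThreeMeetsAll (regulus f) := by
  intro L hL A hA B hB C hC hAB hAC hBC mA mB mC X hX
  suffices ∃ v, v ≠ 0 ∧ transversal f v = L by
    obtain ⟨v, hv, rfl⟩ := this
    exact transversal_meets h hf hv hX
  have hne {c c' : Subring.center K} (hcc : graphOf (c • f) ≠ graphOf (c' • f)) : c ≠ c' :=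
    ne_of_apply_ne (fun c : Subring.center K => graphOf (c • f)) hcc
  rcases hA with rfl | ⟨a, rfl⟩ <;> rcases hB with rfl | ⟨b, rfl⟩ <;>
    rcases hC with rfl | ⟨c, rfl⟩
  · exact absurd rfl hAB
  · exact absurd rfl hAB
  · exact absurd rfl hAC
  · exact exists_transversal_eq_of_meets_right h hf hL (hne hBC) mA mB mC
  · exact absurd rfl hBC
  · exact exists_transversal_eq_of_meets_right h hf hL (hne hAC) mB mA mC
  · exact exists_transversal_eq_of_meets_right h hf hL (hne hAB) mC mA mB
  · exact exists_transversal_eq_of_meets_three_graphOf h hf hL (hne hAB) (hne hAC) (hne hBC)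
      mA mB mC

lemma mem_regulus_left : E₀ ∈ regulus f := by
  simpa using graphOf_mem_regulus (f := f) 0

lemma mem_regulus_right : E₁ ∈ regulus f :=
  Set.mem_insert _ _

lemma graphOf_self_mem_regulus : graphOf f ∈ regulus f := by
  simpa using graphOf_mem_regulus (f := f) 1

lemma isPartialZRegulus_regulus (h : IsCompl E₀ E₁) (hf : Function.Bijective f)
    (h₁ : E₁ ∈ Grass K V) (h01 : E₀ ≠ E₁) (h02 : E₀ ≠ graphOf f) (h12 : E₁ ≠ graphOf f) :
    IsPartialZRegulus (regulus f) :=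
  ⟨⟨⟨regulus_subset_grass h h₁, regulus_pairwise_distant h hf⟩,
    ⟨E₀, mem_regulus_left, E₁, mem_regulus_right, _, graphOf_self_mem_regulus, h01, h02, h12⟩⟩,
    meetsThreeMeetsAll_regulus h hf.1⟩

lemma exists_smul_eq_of_meets_transversal (h : IsCompl E₀ E₁) {g : E₀ →ₗ[K] E₁} {v : E₀}
    (hm : Meets (transversal f v) (graphOf g)) : ∃ b : K, g v = b • f v := by
  obtain ⟨u, hu, hmem⟩ := (meets_graphOf_iff h).mp hm
  obtain ⟨s, t, hst⟩ := mem_span_pair.mp hmem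
  obtain ⟨rfl, hgu⟩ := (add_eq_add_iff_of_isCompl h).mp
    (by simpa using hst : ((s • v : E₀) : V) + (t • f v : E₁) = (u : V) + g u)
  have hs : s ≠ 0 := by rintro rfl; simp at hu
  refine ⟨s⁻¹ * t, ?_⟩
  rw [map_smul] at hgu
  rw [mul_smul, hgu, inv_smul_smul₀ hs]

lemma subset_regulus (h : IsCompl E₀ E₁) (hf : Function.Bijective f)
    (hE₁ : Module.finrank K E₁ ≠ 1) {S : Set (Submodule K V)} (hS : IsPartialZRegulus S)
    (h0 : E₀ ∈ S) (h1 : E₁ ∈ S) (h2 : graphOf f ∈ S)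
    (h01 : E₀ ≠ E₁) (h02 : E₀ ≠ graphOf f) (h12 : E₁ ≠ graphOf f) : S ⊆ regulus f := by
  intro X hX
  rcases eq_or_ne X E₁ with rfl | hXE
  · exact mem_regulus_right
  obtain ⟨g, rfl⟩ := exists_graphOf_eq h (hS.1.1.2 hX h1 hXE)
  have hcollinear : ∀ v, ∃ b : K, g v = b • f v := by
    intro v
    rcases eq_or_ne v 0 with rfl | hv
    · exact ⟨0, by simp⟩
    have hR {Y} (hY : Y ∈ regulus f) := transversal_meets h hf.1 hv hY
    exact exists_smul_eq_of_meets_transversal h <|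
      hS.2 _ (isLine_transversal h hf.1 hv) _ h0 _ h1 _ h2 h01 h02 h12 (hR mem_regulus_left)
        (hR mem_regulus_right) (hR graphOf_self_mem_regulus) _ hX
  obtain ⟨c, rfl⟩ := exists_eq_smul_of_forall_exists_smul hf hE₁ hcollinear
  exact graphOf_mem_regulus c

end Regulus

lemma existsUnique_zRegulus_of_forall_subset {A R : Set (Submodule K V)}
    (hR : IsPartialZRegulus R) (hAR : A ⊆ R)
    (hmax : ∀ S, IsPartialZRegulus S → A ⊆ S → S ⊆ R) :
    ∃! R, IsZRegulus R ∧ A ⊆ R :=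
  ⟨R, ⟨⟨hR, fun S hS hRS => hRS.antisymm (hmax S hS (hAR.trans hRS))⟩, hAR⟩,
    fun _ ⟨hR', hAR'⟩ => hR'.2 R hR (hmax _ hR'.1 hAR')⟩

theorem unique_zRegulus_through_three_general (hV : 2 < Module.rank K V)
    (E₀ E₁ E₂ : Submodule K V)
    (h₁ : E₁ ∈ Grass K V)
    (h01 : Distant E₀ E₁) (h02 : Distant E₀ E₂) (h12 : Distant E₁ E₂) :
    ∃! R : Set (Submodule K V), IsZRegulus R ∧ E₀ ∈ R ∧ E₁ ∈ R ∧ E₂ ∈ R := by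
  have : Nontrivial V := rank_pos_iff_nontrivial.mp (zero_lt_two.trans hV)
  obtain ⟨f, rfl⟩ := exists_graphOf_eq h01 h12.symm
  have hf : Function.Bijective f := by
    have h02' : IsCompl (graphOf (0 : E₀ →ₗ[K] E₁)) (graphOf f) := by rw [graphOf_zero]; exact h02
    simpa using (isCompl_graphOf_iff h01).mp h02'
  have key := existsUnique_zRegulus_of_forall_subset (A := {E₀, E₁, graphOf f})
    (isPartialZRegulus_regulus h01 hf h₁ h01.ne h02.ne h12.ne)
    (by simp [Set.insert_subset_iff, mem_regulus_left, mem_regulus_right, graphOf_self_mem_regulus])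
    fun S hS hA => subset_regulus h01 hf (finrank_ne_one_of_mem_grass hV h₁) hS
      (hA (by simp)) (hA (by simp)) (hA (by simp)) h01.ne h02.ne h12.ne
  simpa only [Set.insert_subset_iff, Set.singleton_subset_iff] using key

/-- Corollary 4.7 (second part). Any three mutually distant
elements of `𝒢` lie in a unique `Z`-regulus. -/
theorem unique_zRegulus_through_three (hV : 2 < Module.rank K V)
    (E₀ E₁ E₂ : Submodule K V)
    (h₀ : E₀ ∈ Grass K V) (h₁ : E₁ ∈ Grass K V) (h₂ : E₂ ∈ Grass K V)
    (h01 : Distant E₀ E₁) (h02 : Distant E₀ E₂) (h12 : Distant E₁ E₂) :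
    ∃! R : Set (Submodule K V), IsZRegulus R ∧ E₀ ∈ R ∧ E₁ ∈ R ∧ E₂ ∈ R :=
  unique_zRegulus_through_three_general hV E₀ E₁ E₂ h₁ h01 h02 h12
end
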